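/- Let c, h₁ ∈ ℂ with c ≠ 0 and h₁ ≠ 0, let k₂ ∈ ℂ, and set a = 1, b = 0. The ℂ-bilinear product ∘ on A defined on basis elements by L_m∘L_n = cL_{m+n+1} − (n+1)L_{m+n}, L_m∘W_n = h₁L_{m+n+1} − (n+1)W_{m+n}, W_m∘L_n = h₁L_{m+n+1} and W_m∘W_n = (h₁(h₁−k₂)/c)L_{m+n+1} + k₂W_{m+n+1} is left-symmetric, and it is a compatible left-symmetric algebraic structure on the Lie algebra Coeff(W(1,0)). -/

import Mathlib

/-!
Both identities are multilinear in their arguments, so it suffices to check them on the basis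
vectors `L m`, `W m`. There each side is an explicit combination of `L`'s and `W`'s, and the
coefficients agree as rational functions of `c, h₁, k₂, m, n, p`; the only division, by `c` in
`W m ∘ W n`, is cleared when it meets the factor `c` of `L m ∘ L n`.
-/

noncomputable section

abbrev A : Type := (ℤ ⊕ ℤ) →₀ ℂ

def L (m : ℤ) : A := Finsupp.single (Sum.inl m) 1

def W (m : ℤ) : A := Finsupp.single (Sum.inr m) 1

namespace LinearMap

variable {R V ι : Type*} [CommRing R] [AddCommGroup V] [Module R V]

def associator (μ : V →ₗ[R] V →ₗ[R] V) : V →ₗ[R] V →ₗ[R] V →ₗ[R] V :=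
  μ.compr₂ μ - (llcomp R V V V ∘ₗ μ).compl₂ μ

@[simp]
theorem associator_apply (μ : V →ₗ[R] V →ₗ[R] V) (x y z : V) :
    associator μ x y z = μ (μ x y) z - μ x (μ y z) :=
  rfl

def IsLeftSymmetric (μ : V →ₗ[R] V →ₗ[R] V) : Prop :=
  ∀ x y z, associator μ x y z = associator μ y x z

theorem isLeftSymmetric_of_basis (b : Module.Basis ι R V) {μ : V →ₗ[R] V →ₗ[R] V}
    (h : ∀ i j k, associator μ (b i) (b j) (b k) = associator μ (b j) (b i) (b k)) :
    IsLeftSymmetric μ := by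
  have : associator μ = (associator μ).flip := ext_basis b b fun i j => b.ext fun k => h i j k
  exact fun x y z => LinearMap.congr_fun (congr_fun₂ this x y) z

theorem sub_flip_eq_of_basis (b : Module.Basis ι R V) {μ β : V →ₗ[R] V →ₗ[R] V}
    (h : ∀ i j, μ (b i) (b j) - μ (b j) (b i) = β (b i) (b j)) (x y : V) :
    μ x y - μ y x = β x y :=
  congr_fun₂ (ext_basis (B := μ - μ.flip) b b h) x y

end LinearMap

theorem basisSingleOne_inl (m : ℤ) : Finsupp.basisSingleOne (Sum.inl m) = L m := by
  simp [L]

theorem basisSingleOne_inr (m : ℤ) : Finsupp.basisSingleOne (Sum.inr m) = W m := by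
  simp [W]

structure IsCoeffWProduct (c h₁ k₂ : ℂ) (M : A →ₗ[ℂ] A →ₗ[ℂ] A) : Prop where
  LL : ∀ m n : ℤ, M (L m) (L n) = c • L (m + n + 1) - ((n : ℂ) + 1) • L (m + n)
  LW : ∀ m n : ℤ, M (L m) (W n) = h₁ • L (m + n + 1) - ((n : ℂ) + 1) • W (m + n)
  WL : ∀ m n : ℤ, M (W m) (L n) = h₁ • L (m + n + 1)
  WW : ∀ m n : ℤ, M (W m) (W n) = (h₁ * (h₁ - k₂) / c) • L (m + n + 1) + k₂ • W (m + n + 1)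

structure IsCoeffWBracket (B : A →ₗ[ℂ] A →ₗ[ℂ] A) : Prop where
  LL : ∀ m n : ℤ, B (L m) (L n) = ((m : ℂ) - (n : ℂ)) • L (m + n)
  LW : ∀ m n : ℤ, B (L m) (W n) =
    (((m : ℂ) + 1) * ((1 : ℂ) - 1) - ((n : ℂ) + 1)) • W (m + n) + (0 : ℂ) • W (m + n + 1)
  WL : ∀ m n : ℤ, B (W n) (L m) = -B (L m) (W n)
  WW : ∀ m n : ℤ, B (W m) (W n) = 0

namespace IsCoeffWProduct

variable {c h₁ k₂ : ℂ} {M : A →ₗ[ℂ] A →ₗ[ℂ] A}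

theorem isLeftSymmetric (hM : IsCoeffWProduct c h₁ k₂ M) (hc : c ≠ 0) :
    M.IsLeftSymmetric := by
  refine LinearMap.isLeftSymmetric_of_basis Finsupp.basisSingleOne ?_
  rintro (m | m) (n | n) (p | p) <;>
    simp only [basisSingleOne_inl, basisSingleOne_inr, LinearMap.associator_apply,
      hM.LL, hM.LW, hM.WL, hM.WW, map_smul, map_sub, map_add,
      LinearMap.smul_apply, LinearMap.sub_apply, LinearMap.add_apply] <;>
    ring_nf <;> match_scalars <;> field_simp <;> ring

theorem sub_flip_eq (hM : IsCoeffWProduct c h₁ k₂ M) {B : A →ₗ[ℂ] A →ₗ[ℂ] A}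
    (hB : IsCoeffWBracket B) (x y : A) : M x y - M y x = B x y := by
  refine LinearMap.sub_flip_eq_of_basis Finsupp.basisSingleOne ?_ x y
  rintro (m | m) (n | n) <;>
    simp only [basisSingleOne_inl, basisSingleOne_inr, hM.LL, hM.LW, hM.WL, hM.WW,
      hB.LL, hB.LW, hB.WL, hB.WW] <;>
    ring_nf <;> match_scalars <;> ring

end IsCoeffWProduct

theorem stmt17_general (c h₁ k₂ : ℂ) (hc : c ≠ 0)
    -- `M` is the ℂ-bilinear product `∘` given on basis elements by:
    (M : A →ₗ[ℂ] A →ₗ[ℂ] A)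
    (hLL : ∀ m n : ℤ, M (L m) (L n) = c • L (m + n + 1) - ((n : ℂ) + 1) • L (m + n))
    (hLW : ∀ m n : ℤ, M (L m) (W n) = h₁ • L (m + n + 1) - ((n : ℂ) + 1) • W (m + n))
    (hWL : ∀ m n : ℤ, M (W m) (L n) = h₁ • L (m + n + 1))
    (hWW : ∀ m n : ℤ, M (W m) (W n) =
      (h₁ * (h₁ - k₂) / c) • L (m + n + 1) + k₂ • W (m + n + 1))
    -- `B` is the ℂ-bilinear Lie bracket of Coeff(W(a,b)) on basis elements:
    (B : A →ₗ[ℂ] A →ₗ[ℂ] A)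
    (hBLL : ∀ m n : ℤ, B (L m) (L n) = ((m : ℂ) - (n : ℂ)) • L (m + n))
    (hBLW : ∀ m n : ℤ, B (L m) (W n) =
      (((m : ℂ) + 1) * ((1 : ℂ) - 1) - ((n : ℂ) + 1)) • W (m + n)
        + (0 : ℂ) • W (m + n + 1))
    (hBWL : ∀ m n : ℤ, B (W n) (L m) = -B (L m) (W n))
    (hBWW : ∀ m n : ℤ, B (W m) (W n) = 0) :
    -- `∘ = M` is left-symmetric:
    ((∀ x y z : A, M (M x y) z - M x (M y z) = M (M y x) z - M y (M x z)) ∧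
    -- and compatible with the Lie bracket:
    (∀ x y : A, M x y - M y x = B x y)) := by
  have hM : IsCoeffWProduct c h₁ k₂ M := ⟨hLL, hLW, hWL, hWW⟩
  exact ⟨hM.isLeftSymmetric hc, hM.sub_flip_eq ⟨hBLL, hBLW, hBWL, hBWW⟩⟩

/-- Corollary 3.8 (8), on Coeff(W(1,0)), with `c ≠ 0`, `h₁ ≠ 0`. -/
theorem stmt17 (c h₁ k₂ : ℂ) (hc : c ≠ 0) (hh : h₁ ≠ 0)
    -- `M` is the ℂ-bilinear product `∘` given on basis elements by:
    (M : A →ₗ[ℂ] A →ₗ[ℂ] A)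
    (hLL : ∀ m n : ℤ, M (L m) (L n) = c • L (m + n + 1) - ((n : ℂ) + 1) • L (m + n))
    (hLW : ∀ m n : ℤ, M (L m) (W n) = h₁ • L (m + n + 1) - ((n : ℂ) + 1) • W (m + n))
    (hWL : ∀ m n : ℤ, M (W m) (L n) = h₁ • L (m + n + 1))
    (hWW : ∀ m n : ℤ, M (W m) (W n) =
      (h₁ * (h₁ - k₂) / c) • L (m + n + 1) + k₂ • W (m + n + 1))
    -- `B` is the ℂ-bilinear Lie bracket of Coeff(W(a,b)) on basis elements:
    (B : A →ₗ[ℂ] A →ₗ[ℂ] A)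
    (hBLL : ∀ m n : ℤ, B (L m) (L n) = ((m : ℂ) - (n : ℂ)) • L (m + n))
    (hBLW : ∀ m n : ℤ, B (L m) (W n) =
      (((m : ℂ) + 1) * ((1 : ℂ) - 1) - ((n : ℂ) + 1)) • W (m + n)
        + (0 : ℂ) • W (m + n + 1))
    (hBWL : ∀ m n : ℤ, B (W n) (L m) = -B (L m) (W n))
    (hBWW : ∀ m n : ℤ, B (W m) (W n) = 0) :
    -- `∘ = M` is left-symmetric:
    ((∀ x y z : A, M (M x y) z - M x (M y z) = M (M y x) z - M y (M x z)) ∧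
    -- and compatible with the Lie bracket:
    (∀ x y : A, M x y - M y x = B x y)) :=
  stmt17_general c h₁ k₂ hc M hLL hLW hWL hWW B hBLL hBLW hBWL hBWW

end
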